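/- arXiv:0906.1802 — 2 statements merged into one kernel-verified Lean document; each statement's English description precedes it below -/
import Mathlib

section
/- Let 𝔤 = 𝔥 ⊕ 𝔪 be a reductive decomposition with 𝔪 = 𝔥^⊥ relative to an invariant inner product on 𝔤. If 𝔞 is the orthogonal complement in 𝔤 of 𝔱 = [𝔪,𝔪] + 𝔪, then 𝔞 ⊆ 𝔥 and 𝔞 is an ideal of 𝔤. -/
/-!
Since `𝔪 ⊆ 𝔱`, we get `𝔞 = 𝔱ᗮ ⊆ 𝔪ᗮ = 𝔥`. Invariance makes `𝔪` stable under `ad 𝔥`, so for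
`a ∈ 𝔞` the bracket `⁅a, m⁆` lies in `𝔪`, while `B ⁅m, a⁆ m' = -B a ⁅m, m'⁆ = 0` puts it in `𝔪ᗮ`;
by definiteness `⁅a, 𝔪⁆ = 0`, and then `⁅a, 𝔱⁆ = 0` by the Leibniz rule. Finally
`B t ⁅x, a⁆ = B x ⁅a, t⁆ = 0` for `t ∈ 𝔱`, so `⁅𝔤, 𝔞⁆ ⊆ 𝔞`.
-/

namespace Submodule

variable {R L : Type*} [CommRing R] [LieRing L] [LieAlgebra R L]

def bracketsSup (M : Submodule R L) : Submodule R L :=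
  span R {z : L | ∃ x ∈ M, ∃ y ∈ M, ⁅x, y⁆ = z} ⊔ M

theorem le_bracketsSup (M : Submodule R L) : M ≤ M.bracketsSup :=
  le_sup_right

theorem lie_mem_bracketsSup {M : Submodule R L} {x y : L} (hx : x ∈ M) (hy : y ∈ M) :
    ⁅x, y⁆ ∈ M.bracketsSup :=
  mem_sup_left (subset_span ⟨x, hx, y, hy, rfl⟩)

theorem lie_eq_zero_of_mem_bracketsSup {M : Submodule R L} {a t : L}
    (ha : ∀ m ∈ M, ⁅a, m⁆ = 0) (ht : t ∈ M.bracketsSup) : ⁅a, t⁆ = 0 := by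
  have hker : M.bracketsSup ≤ LinearMap.ker (LieAlgebra.ad R L a) := by
    refine sup_le (span_le.mpr ?_) ha
    rintro _ ⟨x, hx, y, hy, rfl⟩
    simp [leibniz_lie, ha x hx, ha y hy]
  exact hker ht

end Submodule

namespace LinearMap.BilinForm

variable {R L : Type*} [CommRing R] [LieRing L] [LieAlgebra R L] {B : LinearMap.BilinForm R L}

theorem lie_mem_orthogonal_lieSubalgebra (hB : B.lieInvariant L) {H : LieSubalgebra R L}
    {h m : L} (hh : h ∈ H) (hm : m ∈ B.orthogonal H.toSubmodule) :
    ⁅h, m⁆ ∈ B.orthogonal H.toSubmodule := fun h' hh' => by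
  rw [← neg_eq_zero, ← hB]
  exact hm _ (H.lie_mem hh hh')

theorem lie_eq_zero_of_mem_orthogonal_bracketsSup (hB : B.lieInvariant L) (hB_symm : B.IsSymm)
    (hB_anis : ∀ x, B x x = 0 → x = 0) {M : Submodule R L} {a : L}
    (hM : ∀ m ∈ M, ⁅a, m⁆ ∈ M) (ha : a ∈ B.orthogonal M.bracketsSup) {m : L} (hm : m ∈ M) :
    ⁅a, m⁆ = 0 := by
  refine hB_anis _ ?_
  calc B ⁅a, m⁆ ⁅a, m⁆ = -B ⁅m, a⁆ ⁅a, m⁆ := by rw [← LinearMap.map_neg₂, lie_skew]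
    _ = B a ⁅m, ⁅a, m⁆⁆ := by rw [hB, neg_neg]
    _ = B ⁅m, ⁅a, m⁆⁆ a := hB_symm.eq _ _
    _ = 0 := ha _ (Submodule.lie_mem_bracketsSup hm (hM m hm))

theorem lie_mem_orthogonal_of_lie_eq_zero (hB : B.lieInvariant L) (hB_symm : B.IsSymm)
    {T : Submodule R L} {a : L} (ha : ∀ t ∈ T, ⁅a, t⁆ = 0) (x : L) :
    ⁅x, a⁆ ∈ B.orthogonal T := fun t ht =>
  calc B t ⁅x, a⁆ = -B ⁅a, x⁆ t := by rw [hB_symm.eq, ← LinearMap.map_neg₂, lie_skew]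
    _ = B x ⁅a, t⁆ := by rw [hB, neg_neg]
    _ = 0 := by rw [ha t ht, map_zero]

end LinearMap.BilinForm

/-- Let `𝔤 = 𝔥 ⊕ 𝔪` be a reductive decomposition with `𝔪 = 𝔥ᗮ`
relative to an invariant inner product `B` on `𝔤`. If `𝔞` is the orthogonal
complement of `𝔱 = Span [𝔪,𝔪] + 𝔪`, then `𝔞 ⊆ 𝔥` and `𝔞` is an ideal of `𝔤`. -/
theorem affine_group_stmt_9
    {𝔤 : Type*} [LieRing 𝔤] [LieAlgebra ℝ 𝔤] [FiniteDimensional ℝ 𝔤]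
    (B : LinearMap.BilinForm ℝ 𝔤)
    (hsymm : ∀ x y : 𝔤, B x y = B y x)
    (hpos : ∀ x : 𝔤, x ≠ 0 → 0 < B x x)
    (hinv : ∀ x y z : 𝔤, B ⁅x, y⁆ z + B y ⁅x, z⁆ = 0)
    (𝔥 : LieSubalgebra ℝ 𝔤) (𝔪 𝔱 𝔞 : Submodule ℝ 𝔤)
    (h𝔪 : 𝔪 = B.orthogonal 𝔥.toSubmodule)
    (h𝔱 : 𝔱 = Submodule.span ℝ {z : 𝔤 | ∃ x ∈ 𝔪, ∃ y ∈ 𝔪, ⁅x, y⁆ = z} ⊔ 𝔪)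
    (h𝔞 : 𝔞 = B.orthogonal 𝔱) :
    𝔞 ≤ 𝔥.toSubmodule ∧ (∀ x : 𝔤, ∀ y ∈ 𝔞, ⁅x, y⁆ ∈ 𝔞) := by
  change 𝔱 = 𝔪.bracketsSup at h𝔱
  subst h𝔞 h𝔱
  have hB : B.lieInvariant 𝔤 := fun x y z => eq_neg_of_add_eq_zero_left (hinv x y z)
  have hB_symm : B.IsSymm := ⟨hsymm⟩
  have hB_anis : ∀ x, B x x = 0 → x = 0 := fun x => not_imp_not.mp fun hx => (hpos x hx).ne'
  have hB_nondeg : B.Nondegenerate :=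
    ⟨fun x hx => hB_anis x (hx x), fun x hx => hB_anis x (hx x)⟩
  have h𝔞𝔥 : B.orthogonal 𝔪.bracketsSup ≤ 𝔥.toSubmodule := by
    rw [← B.orthogonal_orthogonal hB_nondeg hB_symm.isRefl 𝔥.toSubmodule, ← h𝔪]
    exact B.orthogonal_le 𝔪.le_bracketsSup
  refine ⟨h𝔞𝔥, fun x a ha => ?_⟩
  have h𝔪_stable : ∀ m ∈ 𝔪, ⁅a, m⁆ ∈ 𝔪 := fun m hm => by
    subst h𝔪
    exact LinearMap.BilinForm.lie_mem_orthogonal_lieSubalgebra hB (h𝔞𝔥 ha) hm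
  have ha𝔪 : ∀ m ∈ 𝔪, ⁅a, m⁆ = 0 := fun m =>
    LinearMap.BilinForm.lie_eq_zero_of_mem_orthogonal_bracketsSup hB hB_symm hB_anis
      h𝔪_stable ha
  exact LinearMap.BilinForm.lie_mem_orthogonal_of_lie_eq_zero hB hB_symm
    (fun t => Submodule.lie_eq_zero_of_mem_bracketsSup ha𝔪) x
end

section
/- Let G be a connected Lie group acting transitively, faithfully and isometrically on a compact normal homogeneous space M = G/H with reductive decomposition 𝔤 = 𝔥 ⊕ 𝔥^⊥. Then 𝔤 = [𝔥^⊥, 𝔥^⊥] + 𝔥^⊥. Algebraic version: if 𝔤 carries an invariant inner product, 𝔥 ⊆ 𝔤 is a subalgebra containing no nonzero ideal of 𝔤, and 𝔪 = 𝔥^⊥, then 𝔤 = Span([𝔪,𝔪]) + 𝔪. -/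
/-!
Let `S = span [𝔪, 𝔪] + 𝔪`. Since `𝔤 = 𝔥 ⊕ 𝔪` and `[𝔥, 𝔪] ⊆ 𝔪`, the Jacobi identity makes `S`
an ideal of `𝔤`. By invariance of the inner product, `Sᗮ` is then an ideal as well, and it lies in
`𝔪ᗮ = 𝔥`. Effectivity forces `Sᗮ = 0`, i.e. `S = 𝔤`.
-/

open LinearMap (BilinForm)

namespace LieAlgebra

variable {R L : Type*} [CommRing R] [LieRing L] [LieAlgebra R L]

/-- `[𝔪, 𝔪] + 𝔪`; for a reductive complement `𝔪` of `𝔥` this is the transvection algebra of the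
canonical connection on `G/H`. -/
def transvectionAlgebra (𝔪 : Submodule R L) : Submodule R L :=
  Submodule.span R {z : L | ∃ x ∈ 𝔪, ∃ y ∈ 𝔪, ⁅x, y⁆ = z} ⊔ 𝔪

variable {𝔥 : LieSubalgebra R L} {𝔪 : Submodule R L}

lemma lie_mem_transvectionAlgebra_of_mem_mem {x y : L} (hx : x ∈ 𝔪) (hy : y ∈ 𝔪) :
    ⁅x, y⁆ ∈ transvectionAlgebra 𝔪 :=
  Submodule.mem_sup_left (Submodule.subset_span ⟨x, hx, y, hy, rfl⟩)

lemma lie_mem_transvectionAlgebra_of_mem_left (h_sup : 𝔥.toSubmodule ⊔ 𝔪 = ⊤)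
    (h_lie : ∀ h ∈ 𝔥, ∀ m ∈ 𝔪, ⁅h, m⁆ ∈ 𝔪) {m : L} (hm : m ∈ 𝔪) (y : L) :
    ⁅m, y⁆ ∈ transvectionAlgebra 𝔪 := by
  obtain ⟨h, hh, m', hm', rfl⟩ := Submodule.mem_sup.mp (h_sup ▸ Submodule.mem_top : y ∈ _)
  rw [lie_add, ← lie_skew m h]
  exact add_mem (Submodule.mem_sup_right (neg_mem (h_lie h hh m hm)))
    (lie_mem_transvectionAlgebra_of_mem_mem hm hm')

lemma lie_mem_transvectionAlgebra_of_mem_subalgebra (h_lie : ∀ h ∈ 𝔥, ∀ m ∈ 𝔪, ⁅h, m⁆ ∈ 𝔪)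
    {h : L} (hh : h ∈ 𝔥) {s : L} (hs : s ∈ transvectionAlgebra 𝔪) :
    ⁅h, s⁆ ∈ transvectionAlgebra 𝔪 := by
  suffices transvectionAlgebra 𝔪 ≤ (transvectionAlgebra 𝔪).comap (LieModule.toEnd R L L h) from
    this hs
  refine sup_le (Submodule.span_le.mpr ?_) fun m hm ↦ Submodule.mem_sup_right (h_lie h hh m hm)
  rintro _ ⟨x, hx, y, hy, rfl⟩
  rw [SetLike.mem_coe, Submodule.mem_comap, LieModule.toEnd_apply_apply, leibniz_lie]
  exact add_mem (lie_mem_transvectionAlgebra_of_mem_mem (h_lie h hh x hx) hy)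
    (lie_mem_transvectionAlgebra_of_mem_mem hx (h_lie h hh y hy))

def transvectionIdeal (h_sup : 𝔥.toSubmodule ⊔ 𝔪 = ⊤) (h_lie : ∀ h ∈ 𝔥, ∀ m ∈ 𝔪, ⁅h, m⁆ ∈ 𝔪) :
    LieIdeal R L where
  toSubmodule := transvectionAlgebra 𝔪
  lie_mem {z s} hs := by
    obtain ⟨h, hh, m, hm, rfl⟩ := Submodule.mem_sup.mp (h_sup ▸ Submodule.mem_top : z ∈ _)
    rw [add_lie]
    exact add_mem (lie_mem_transvectionAlgebra_of_mem_subalgebra h_lie hh hs)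
      (lie_mem_transvectionAlgebra_of_mem_left h_sup h_lie hm s)

lemma lie_mem_orthogonal_of_mem {B : BilinForm R L} (hB : B.lieInvariant L) {h m : L} (hh : h ∈ 𝔥)
    (hm : m ∈ B.orthogonal 𝔥.toSubmodule) : ⁅h, m⁆ ∈ B.orthogonal 𝔥.toSubmodule := by
  intro h' hh'
  rw [← neg_eq_zero, ← hB]
  exact hm _ (𝔥.lie_mem hh hh')

end LieAlgebra

namespace LinearMap.BilinForm

lemma nondegenerate_of_anisotropic {R M : Type*} [CommRing R] [AddCommGroup M] [Module R M]
    {B : BilinForm R M} (hB : B.IsRefl) (h_aniso : ∀ x, B x x = 0 → x = 0) : B.Nondegenerate :=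
  hB.nondegenerate_iff_separatingLeft.mpr fun x hx ↦ h_aniso x (hx x)

variable {K V : Type*} [Field K] [AddCommGroup V] [Module K V] {B : BilinForm K V}

lemma isCompl_orthogonal_of_anisotropic [FiniteDimensional K V] (hB : B.IsRefl)
    (h_aniso : ∀ x, B x x = 0 → x = 0) (W : Submodule K V) : IsCompl W (B.orthogonal W) :=
  (isCompl_orthogonal_iff_disjoint hB).mpr <| Submodule.disjoint_def.mpr
    fun x hxW hxW' ↦ h_aniso x (hxW' x hxW)

end LinearMap.BilinForm

open LieAlgebra LinearMap.BilinForm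

/-- algebraic version: If `𝔤` carries an invariant inner product
`B`, `𝔥 ⊆ 𝔤` is a subalgebra containing no nonzero ideal of `𝔤` (effectivity),
and `𝔪 = 𝔥ᗮ`, then `𝔤 = Span [𝔪,𝔪] + 𝔪`, i.e. `𝔤` is the transvection
algebra of the canonical connection. -/
theorem affine_group_stmt_17
    {𝔤 : Type*} [LieRing 𝔤] [LieAlgebra ℝ 𝔤] [FiniteDimensional ℝ 𝔤]
    (B : LinearMap.BilinForm ℝ 𝔤)
    (hsymm : ∀ x y : 𝔤, B x y = B y x)
    (hpos : ∀ x : 𝔤, x ≠ 0 → 0 < B x x)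
    (hinv : ∀ x y z : 𝔤, B ⁅x, y⁆ z + B y ⁅x, z⁆ = 0)
    (𝔥 : LieSubalgebra ℝ 𝔤)
    (heff : ∀ I : LieIdeal ℝ 𝔤, I.toSubmodule ≤ 𝔥.toSubmodule → I = ⊥)
    (𝔪 : Submodule ℝ 𝔤) (h𝔪 : 𝔪 = B.orthogonal 𝔥.toSubmodule) :
    Submodule.span ℝ {z : 𝔤 | ∃ x ∈ 𝔪, ∃ y ∈ 𝔪, ⁅x, y⁆ = z} ⊔ 𝔪 = ⊤ := by
  have h_refl : B.IsRefl := fun x y hxy ↦ hsymm y x ▸ hxy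
  have h_aniso : ∀ x, B x x = 0 → x = 0 := fun x hx ↦ by_contra fun h ↦ (hpos x h).ne' hx
  have h_nondeg := nondegenerate_of_anisotropic h_refl h_aniso
  have h_inv : B.lieInvariant 𝔤 := fun x y z ↦ eq_neg_of_add_eq_zero_left (hinv x y z)
  have h_sup : 𝔥.toSubmodule ⊔ 𝔪 = ⊤ :=
    h𝔪 ▸ (isCompl_orthogonal_of_anisotropic h_refl h_aniso _).sup_eq_top
  have h_lie : ∀ h ∈ 𝔥, ∀ m ∈ 𝔪, ⁅h, m⁆ ∈ 𝔪 := fun h hh m hm ↦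
    h𝔪 ▸ lie_mem_orthogonal_of_mem h_inv hh (h𝔪 ▸ hm)
  set I := transvectionIdeal h_sup h_lie
  have h_perp_le : (InvariantForm.orthogonal B h_inv I).toSubmodule ≤ 𝔥.toSubmodule := by
    rw [InvariantForm.orthogonal_toSubmodule,
      ← orthogonal_orthogonal h_nondeg h_refl 𝔥.toSubmodule, ← h𝔪]
    exact orthogonal_le le_sup_right
  change I.toSubmodule = ⊤
  rw [← orthogonal_orthogonal h_nondeg h_refl I.toSubmodule,
    ← InvariantForm.orthogonal_toSubmodule B h_inv, heff _ h_perp_le]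
  simp
end
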